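/- Let T(u, u', …, u^{(n-1)}) be a Rosenlicht type differential polynomial of degree n over a differential field K, and let K⟨y⟩ be an extension of K by a special transcendental element y. If the equation T = 0 has a solution in K⟨y⟩, then it has a solution in K. -/
import Mathlib

open scoped Classical

/-- The order of vanishing of a rational function at `y = 0` (with `ord 0 = ⊤`). -/
noncomputable def ordAt0 {K : Type*} [Field K] (R : RatFunc K) : WithTop ℤ :=
  if R = 0 then ⊤
  else ((Polynomial.rootMultiplicity 0 R.num : ℤ) - Polynomial.rootMultiplicity 0 R.denom : ℤ)

namespace RosenAux

open Polynomial RatFunc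

variable {K : Type*} [Field K]

/-- root multiplicity at `0`, as an integer. -/
noncomputable def rm (p : Polynomial K) : ℤ := (Polynomial.rootMultiplicity 0 p : ℤ)

lemma rm_mul {p q : K[X]} (hp : p ≠ 0) (hq : q ≠ 0) : rm (p * q) = rm p + rm q := by
  unfold rm
  rw [Polynomial.rootMultiplicity_mul (mul_ne_zero hp hq)]
  push_cast; ring

lemma ordAt0_zero : ordAt0 (0 : RatFunc K) = ⊤ := if_pos rfl

lemma ordAt0_of_ne {f : RatFunc K} (hf : f ≠ 0) :
    ordAt0 f = ((rm f.num - rm f.denom : ℤ) : WithTop ℤ) := if_neg hf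

lemma ordAt0_div (p q : Polynomial K) (hp : p ≠ 0) (hq : q ≠ 0) :
    ordAt0 ((algebraMap _ (RatFunc K) p) / algebraMap _ _ q)
      = ((rm p - rm q : ℤ) : WithTop ℤ) := by
  set f : RatFunc K := (algebraMap _ (RatFunc K) p) / algebraMap _ _ q with hfdef
  have hf : f ≠ 0 := div_ne_zero (RatFunc.algebraMap_ne_zero hp) (RatFunc.algebraMap_ne_zero hq)
  have hcross : f.num * q = p * f.denom := by
    have h1 : algebraMap _ (RatFunc K) f.num / algebraMap _ _ f.denom = f := num_div_denom f
    rw [hfdef, div_eq_div_iff (RatFunc.algebraMap_ne_zero (denom_ne_zero f))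
      (RatFunc.algebraMap_ne_zero hq)] at h1
    exact RatFunc.algebraMap_injective K (by rw [map_mul, map_mul]; exact h1)
  have hnum : f.num ≠ 0 := num_ne_zero hf
  have hrm : rm f.num + rm q = rm p + rm f.denom := by
    rw [← rm_mul hnum hq, ← rm_mul hp (denom_ne_zero f), hcross]
  rw [ordAt0_of_ne hf]
  congr 1
  omega

lemma ordAt0_mul (f g : RatFunc K) (hf : f ≠ 0) (hg : g ≠ 0) :
    ordAt0 (f * g) = ordAt0 f + ordAt0 g := by
  have h : f * g = (algebraMap _ (RatFunc K) (f.num * g.num)) /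
      algebraMap _ _ (f.denom * g.denom) := by
    rw [map_mul, map_mul, ← div_mul_div_comm, num_div_denom, num_div_denom]
  rw [h, ordAt0_div _ _ (mul_ne_zero (num_ne_zero hf) (num_ne_zero hg))
      (mul_ne_zero (denom_ne_zero f) (denom_ne_zero g)),
    ordAt0_of_ne hf, ordAt0_of_ne hg,
    rm_mul (num_ne_zero hf) (num_ne_zero hg), rm_mul (denom_ne_zero f) (denom_ne_zero g)]
  rw [← WithTop.coe_add]
  congr 1
  ring

lemma le_ordAt0_mul {f g : RatFunc K} {a b : WithTop ℤ}
    (hf : a ≤ ordAt0 f) (hg : b ≤ ordAt0 g) : a + b ≤ ordAt0 (f * g) := by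
  by_cases h0 : f = 0
  · simp [h0, ordAt0_zero]
  by_cases h1 : g = 0
  · simp [h1, ordAt0_zero]
  rw [ordAt0_mul f g h0 h1]
  exact add_le_add hf hg

lemma min_le_ordAt0_add (f g : RatFunc K) :
    min (ordAt0 f) (ordAt0 g) ≤ ordAt0 (f + g) := by
  by_cases h0 : f = 0
  · simp [h0, ordAt0_zero]
  by_cases h1 : g = 0
  · simp [h1, ordAt0_zero]
  by_cases h2 : f + g = 0
  · simp [h2, ordAt0_zero]
  have hsum : f + g = (algebraMap _ (RatFunc K) (f.num * g.denom + f.denom * g.num)) /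
      algebraMap _ _ (f.denom * g.denom) := by
    rw [map_add, map_mul, map_mul, map_mul]
    rw [← div_add_div _ _ (RatFunc.algebraMap_ne_zero (denom_ne_zero f))
      (RatFunc.algebraMap_ne_zero (denom_ne_zero g)), num_div_denom, num_div_denom]
  have hN : f.num * g.denom + f.denom * g.num ≠ 0 := by
    intro h
    rw [h, map_zero, zero_div] at hsum
    exact h2 hsum
  have hmin : min (rm (f.num * g.denom)) (rm (f.denom * g.num))
      ≤ rm (f.num * g.denom + f.denom * g.num) := by
    unfold rm
    have := Polynomial.rootMultiplicity_add (p := f.num * g.denom) (q := f.denom * g.num)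
      (0 : K) hN
    push_cast
    exact_mod_cast this
  rw [hsum, ordAt0_div _ _ hN (mul_ne_zero (denom_ne_zero f) (denom_ne_zero g)),
    ordAt0_of_ne h0, ordAt0_of_ne h1, ← WithTop.coe_min, WithTop.coe_le_coe]
  rw [rm_mul (num_ne_zero h0) (denom_ne_zero g), rm_mul (denom_ne_zero f) (num_ne_zero h1),
    rm_mul (denom_ne_zero f) (denom_ne_zero g)] at *
  rcases le_total (rm f.num - rm f.denom) (rm g.num - rm g.denom) with h | h <;> omega

lemma le_ordAt0_add {f g : RatFunc K} {c : WithTop ℤ}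
    (hf : c ≤ ordAt0 f) (hg : c ≤ ordAt0 g) : c ≤ ordAt0 (f + g) :=
  le_trans (le_min hf hg) (min_le_ordAt0_add f g)

lemma ordAt0_algebraMap (p : K[X]) (hp : p ≠ 0) :
    ordAt0 (algebraMap _ (RatFunc K) p) = (rm p : WithTop ℤ) := by
  have h : algebraMap _ (RatFunc K) p
      = algebraMap _ (RatFunc K) p / algebraMap K[X] (RatFunc K) 1 := by
    rw [map_one, div_one]
  rw [h, ordAt0_div p 1 hp one_ne_zero]
  have : rm (1 : K[X]) = 0 := by
    unfold rm
    simp [Polynomial.rootMultiplicity_eq_zero, Polynomial.IsRoot]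
  rw [this]; ring_nf

lemma ordAt0_one : ordAt0 (1 : RatFunc K) = 0 := by
  have := ordAt0_algebraMap (1 : K[X]) one_ne_zero
  simp only [map_one] at this
  rw [this]
  norm_num [rm, Polynomial.rootMultiplicity_eq_zero, Polynomial.IsRoot]

lemma ordAt0_C (c : K) (hc : c ≠ 0) : ordAt0 (RatFunc.C c) = 0 := by
  rw [← RatFunc.algebraMap_C, ordAt0_algebraMap _ (by simpa using hc)]
  norm_num [rm, Polynomial.rootMultiplicity_eq_zero, Polynomial.IsRoot, hc]

lemma ordAt0_C_nonneg (c : K) : 0 ≤ ordAt0 (RatFunc.C c) := by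
  by_cases hc : c = 0
  · simp [hc, ordAt0_zero]
  · rw [ordAt0_C c hc]

lemma ordAt0_X : ordAt0 (RatFunc.X : RatFunc K) = 1 := by
  rw [← RatFunc.algebraMap_X, ordAt0_algebraMap _ Polynomial.X_ne_zero]
  have : rm (Polynomial.X : K[X]) = 1 := by
    unfold rm
    have : (Polynomial.X : K[X]) = Polynomial.X - Polynomial.C 0 := by simp
    rw [this, Polynomial.rootMultiplicity_X_sub_C_self]
    norm_num
  rw [this]; rfl

lemma ordAt0_neg (f : RatFunc K) : ordAt0 (-f) = ordAt0 f := by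
  by_cases h0 : f = 0
  · simp [h0]
  have : -f = RatFunc.C (-1) * f := by
    rw [map_neg, map_one]; ring
  rw [this, ordAt0_mul _ _ (by simp) h0, ordAt0_C _ (by norm_num), zero_add]

lemma ordAt0_pow {f : RatFunc K} {m : ℤ} (hm : ordAt0 f = (m : WithTop ℤ)) (k : ℕ) :
    ordAt0 (f ^ k) = ((k * m : ℤ) : WithTop ℤ) := by
  have hf : f ≠ 0 := by
    intro h; rw [h, ordAt0_zero] at hm; exact (WithTop.coe_ne_top hm.symm).elim
  induction k with
  | zero => simpa using ordAt0_one
  | succ k ih =>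
    rw [pow_succ, ordAt0_mul _ _ (pow_ne_zero _ hf) hf, ih, hm, ← WithTop.coe_add]
    congr 1
    push_cast; ring

lemma le_ordAt0_pow {f : RatFunc K} {m : ℤ} (hm : (m : WithTop ℤ) ≤ ordAt0 f) (k : ℕ) :
    ((k * m : ℤ) : WithTop ℤ) ≤ ordAt0 (f ^ k) := by
  induction k with
  | zero => simpa using le_of_eq ordAt0_one.symm
  | succ k ih =>
    rw [pow_succ]
    have h := le_ordAt0_mul ih hm
    refine le_trans (le_of_eq ?_) h
    rw [← WithTop.coe_add]
    congr 1
    push_cast; ring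

lemma le_ordAt0_prod {α : Type*} (s : Finset α) (v : α → RatFunc K) (e : α → ℕ) {m : ℤ}
    (h : ∀ i ∈ s, (m : WithTop ℤ) ≤ ordAt0 (v i)) :
    (((∑ i ∈ s, (e i : ℤ) * m) : ℤ) : WithTop ℤ) ≤ ordAt0 (∏ i ∈ s, v i ^ e i) := by
  classical
  induction s using Finset.cons_induction with
  | empty => simp [ordAt0_one]
  | cons a s ha ih =>
    rw [Finset.sum_cons, Finset.prod_cons, WithTop.coe_add]
    exact le_ordAt0_mul (le_ordAt0_pow (h a (Finset.mem_cons_self a s)) (e a))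
      (ih fun b hb => h b (Finset.mem_cons_of_mem hb))

lemma le_ordAt0_sum {α : Type*} (s : Finset α) (f : α → RatFunc K) (c : WithTop ℤ)
    (h : ∀ a ∈ s, c ≤ ordAt0 (f a)) : c ≤ ordAt0 (∑ a ∈ s, f a) := by
  classical
  induction s using Finset.cons_induction with
  | empty => simp [ordAt0_zero]
  | cons a s ha ih =>
    rw [Finset.sum_cons]
    exact le_ordAt0_add (h a (Finset.mem_cons_self a s))
      (ih fun b hb => h b (Finset.mem_cons_of_mem hb))


/-- The subalgebra of rational functions regular at `0`. -/
noncomputable def Oreg (K : Type*) [Field K] : Subalgebra K (RatFunc K) where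
  carrier := {f | 0 ≤ ordAt0 f}
  mul_mem' := by
    intro a b ha hb
    have := le_ordAt0_mul ha hb
    simpa using this
  add_mem' := by
    intro a b ha hb
    exact le_ordAt0_add ha hb
  algebraMap_mem' := by
    intro c
    show 0 ≤ ordAt0 (algebraMap K (RatFunc K) c)
    have h : algebraMap K (RatFunc K) c = RatFunc.C c := by rw [RatFunc.algebraMap_eq_C]
    rw [h]
    exact ordAt0_C_nonneg c
  one_mem' := by
    show 0 ≤ ordAt0 (1 : RatFunc K)
    exact le_of_eq ordAt0_one.symm

/-- Evaluation at `0`. -/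
noncomputable def ev (f : RatFunc K) : K := RatFunc.eval (RingHom.id K) 0 f

lemma denom_eval₂_ne_zero {f : RatFunc K} (h : 0 ≤ ordAt0 f) :
    Polynomial.eval₂ (RingHom.id K) 0 f.denom ≠ 0 := by
  rw [Polynomial.eval₂_at_zero]
  intro hden
  have hd : f.denom.IsRoot 0 := by
    rwa [Polynomial.IsRoot, ← Polynomial.coeff_zero_eq_eval_zero]
  by_cases h0 : f = 0
  · rw [h0] at hden
    simp [RatFunc.denom_zero] at hden
  have hrd : 0 < f.denom.rootMultiplicity 0 :=
    (Polynomial.rootMultiplicity_pos (denom_ne_zero f)).2 hd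
  have hord := ordAt0_of_ne h0
  rw [hord] at h
  have hrn : 0 < f.num.rootMultiplicity 0 := by
    have := WithTop.coe_le_coe.mp h
    unfold rm at this
    omega
  have hn : f.num.IsRoot 0 := (Polynomial.rootMultiplicity_pos (num_ne_zero h0)).1 hrn
  have hdvd1 : Polynomial.X - Polynomial.C 0 ∣ f.num := Polynomial.dvd_iff_isRoot.2 hn
  have hdvd2 : Polynomial.X - Polynomial.C 0 ∣ f.denom := Polynomial.dvd_iff_isRoot.2 hd
  rw [map_zero, sub_zero] at hdvd1 hdvd2
  exact Polynomial.not_isUnit_X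
    ((RatFunc.isCoprime_num_denom f).isUnit_of_dvd' hdvd1 hdvd2)

lemma ev_add {f g : RatFunc K} (hf : 0 ≤ ordAt0 f) (hg : 0 ≤ ordAt0 g) :
    ev (f + g) = ev f + ev g :=
  RatFunc.eval_add _ _ (denom_eval₂_ne_zero hf) (denom_eval₂_ne_zero hg)

lemma ev_mul {f g : RatFunc K} (hf : 0 ≤ ordAt0 f) (hg : 0 ≤ ordAt0 g) :
    ev (f * g) = ev f * ev g :=
  RatFunc.eval_mul _ _ (denom_eval₂_ne_zero hf) (denom_eval₂_ne_zero hg)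

lemma ev_C (c : K) : ev (RatFunc.C c) = c := RatFunc.eval_C _ _

lemma ev_zero : ev (0 : RatFunc K) = 0 := RatFunc.eval_zero _ _

lemma ev_one : ev (1 : RatFunc K) = 1 := RatFunc.eval_one _ _

lemma ev_algebraMap (p : K[X]) : ev (algebraMap _ (RatFunc K) p) = p.coeff 0 := by
  unfold ev
  rw [RatFunc.eval_algebraMap]
  simp [Polynomial.eval₂_at_zero]

lemma ev_eq_zero_of_pos {f : RatFunc K} (h : 1 ≤ ordAt0 f) : ev f = 0 := by
  by_cases h0 : f = 0
  · rw [h0]; exact ev_zero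
  rw [ordAt0_of_ne h0] at h
  have := WithTop.coe_le_coe.mp h
  have hrn : 0 < f.num.rootMultiplicity 0 := by unfold rm at this; omega
  have hn : f.num.IsRoot 0 := (Polynomial.rootMultiplicity_pos (num_ne_zero h0)).1 hrn
  unfold ev RatFunc.eval
  rw [Polynomial.eval₂_at_zero]
  rw [Polynomial.IsRoot, ← Polynomial.coeff_zero_eq_eval_zero] at hn
  simp [hn]

lemma denom_coeff_ne_zero {f : RatFunc K} (h : 0 ≤ ordAt0 f) : f.denom.coeff 0 ≠ 0 := by
  have := denom_eval₂_ne_zero h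
  rwa [Polynomial.eval₂_at_zero] at this

lemma ev_mul_denom {f : RatFunc K} (h : 0 ≤ ordAt0 f) :
    ev f * (f.denom.coeff 0) = f.num.coeff 0 := by
  unfold ev RatFunc.eval
  rw [Polynomial.eval₂_at_zero, Polynomial.eval₂_at_zero]
  simp only [RingHom.id_apply]
  exact div_mul_cancel₀ _ (denom_coeff_ne_zero h)

/-- Evaluation at `0` as an algebra homomorphism on `Oreg`. -/
noncomputable def evO : Oreg K →ₐ[K] K where
  toFun f := ev f.1
  map_one' := ev_one
  map_mul' x y := ev_mul x.2 y.2
  map_zero' := ev_zero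
  map_add' x y := ev_add x.2 y.2
  commutes' c := by
    have : ((algebraMap K (Oreg K) c : Oreg K) : RatFunc K) = RatFunc.C c := by
      rw [← RatFunc.algebraMap_eq_C]; rfl
    show ev _ = c
    rw [this, ev_C]


lemma ordAt0_nonneg_mul {f g : RatFunc K} (hf : 0 ≤ ordAt0 f) (hg : 0 ≤ ordAt0 g) :
    0 ≤ ordAt0 (f * g) := by
  have := le_ordAt0_mul hf hg
  simpa using this

lemma ordAt0_nonneg_pow {f : RatFunc K} (hf : 0 ≤ ordAt0 f) (k : ℕ) :
    0 ≤ ordAt0 (f ^ k) := by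
  induction k with
  | zero => rw [pow_zero]; exact le_of_eq ordAt0_one.symm
  | succ k ih => rw [pow_succ]; exact ordAt0_nonneg_mul ih hf

lemma ordAt0_natCast_nonneg (k : ℕ) : 0 ≤ ordAt0 ((k : RatFunc K)) := by
  rw [← map_natCast (RatFunc.C : K →+* RatFunc K) k]
  exact ordAt0_C_nonneg _

lemma ordAt0_X_pow (k : ℕ) : ordAt0 ((RatFunc.X : RatFunc K) ^ k) = ((k : ℤ) : WithTop ℤ) := by
  have := ordAt0_pow (f := (RatFunc.X : RatFunc K)) (m := 1) ordAt0_X k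
  simpa using this

section Deriv

variable (dK : K → K) (D : RatFunc K → RatFunc K) (R₀ : RatFunc K)

lemma D_zero (hadd : ∀ a b, D (a + b) = D a + D b) : D 0 = 0 := by
  have h := hadd 0 0
  rw [add_zero] at h
  have h2 : D 0 + D 0 = D 0 + 0 := by rw [add_zero, ← h]
  exact (add_left_cancel h2)

lemma D_one (hmul : ∀ a b, D (a * b) = D a * b + a * D b) : D 1 = 0 := by
  have h := hmul 1 1
  rw [mul_one, mul_one, one_mul] at h
  have h2 : D 1 + D 1 = D 1 + 0 := by rw [add_zero, ← h]
  exact (add_left_cancel h2)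

lemma dK_zero (hKadd : ∀ a b : K, dK (a + b) = dK a + dK b) : dK 0 = 0 := by
  have h := hKadd 0 0
  rw [add_zero] at h
  have h2 : dK 0 + dK 0 = dK 0 + 0 := by rw [add_zero, ← h]
  exact (add_left_cancel h2)

lemma D_X_pow (hmul : ∀ a b, D (a * b) = D a * b + a * D b)
    (hX : D RatFunc.X = RatFunc.X * R₀) (k : ℕ) :
    D ((RatFunc.X : RatFunc K) ^ k) = (k : RatFunc K) * RatFunc.X ^ k * R₀ := by
  induction k with
  | zero => rw [pow_zero, D_one D hmul]; push_cast; ring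
  | succ k ih =>
    rw [pow_succ, hmul, ih, hX]
    push_cast; ring

lemma alg_monomial (k : ℕ) (c : K) :
    algebraMap K[X] (RatFunc K) (Polynomial.monomial k c) = RatFunc.C c * RatFunc.X ^ k := by
  rw [← Polynomial.C_mul_X_pow_eq_monomial, map_mul, map_pow, RatFunc.algebraMap_C,
    RatFunc.algebraMap_X]

lemma rm_nonneg (p : K[X]) : 0 ≤ rm p := Int.natCast_nonneg _

lemma ordAt0_alg_nonneg (p : K[X]) : 0 ≤ ordAt0 (algebraMap K[X] (RatFunc K) p) := by
  by_cases hp : p = 0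
  · rw [hp, map_zero, ordAt0_zero]; exact le_top
  · rw [ordAt0_algebraMap p hp]
    exact_mod_cast rm_nonneg p

lemma ord_D_alg_nonneg
    (hadd : ∀ a b, D (a + b) = D a + D b)
    (hmul : ∀ a b, D (a * b) = D a * b + a * D b)
    (hC : ∀ c : K, D (RatFunc.C c) = RatFunc.C (dK c))
    (hX : D RatFunc.X = RatFunc.X * R₀)
    (hR₀ : 0 ≤ ordAt0 R₀) (p : K[X]) :
    0 ≤ ordAt0 (D (algebraMap K[X] (RatFunc K) p)) := by
  induction p using Polynomial.induction_on' with
  | add p q hp hq => rw [map_add, hadd]; exact le_ordAt0_add hp hq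
  | monomial k c =>
    rw [alg_monomial, hmul, hC, D_X_pow D R₀ hmul hX]
    apply le_ordAt0_add
    · exact ordAt0_nonneg_mul (ordAt0_C_nonneg _)
        (ordAt0_nonneg_pow (le_trans (by norm_num) (le_of_eq ordAt0_X.symm)) k)
    · exact ordAt0_nonneg_mul (ordAt0_C_nonneg _)
        (ordAt0_nonneg_mul (ordAt0_nonneg_mul (ordAt0_natCast_nonneg k)
          (ordAt0_nonneg_pow (le_trans (by norm_num) (le_of_eq ordAt0_X.symm)) k)) hR₀)

lemma ord_D_alg_ge
    (hadd : ∀ a b, D (a + b) = D a + D b)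
    (hmul : ∀ a b, D (a * b) = D a * b + a * D b)
    (hC : ∀ c : K, D (RatFunc.C c) = RatFunc.C (dK c))
    (hX : D RatFunc.X = RatFunc.X * R₀)
    (hR₀ : 0 ≤ ordAt0 R₀) (p : K[X]) (hp : p ≠ 0) :
    (rm p : WithTop ℤ) ≤ ordAt0 (D (algebraMap K[X] (RatFunc K) p)) := by
  obtain ⟨s, hsp, hds⟩ := p.exists_eq_pow_rootMultiplicity_mul_and_not_dvd hp 0
  rw [map_zero, sub_zero] at hsp hds
  set m := p.rootMultiplicity 0 with hm
  have halg : algebraMap K[X] (RatFunc K) p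
      = RatFunc.X ^ m * algebraMap K[X] (RatFunc K) s := by
    rw [hsp, map_mul, map_pow, RatFunc.algebraMap_X]
  have hrmp : rm p = (m : ℤ) := rfl
  rw [halg, hmul, D_X_pow D R₀ hmul hX, hrmp]
  apply le_ordAt0_add
  · have h1 := le_ordAt0_mul (le_ordAt0_mul (le_ordAt0_mul (ordAt0_natCast_nonneg (K := K) m)
      (le_of_eq (ordAt0_X_pow (K := K) m).symm)) hR₀) (ordAt0_alg_nonneg s)
    refine le_trans (le_of_eq ?_) h1
    simp
  · have h2 := le_ordAt0_mul (le_of_eq (ordAt0_X_pow (K := K) m).symm)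
      (ord_D_alg_nonneg dK D R₀ hadd hmul hC hX hR₀ s)
    refine le_trans (le_of_eq ?_) h2
    simp

lemma ord_D_ge
    (hadd : ∀ a b, D (a + b) = D a + D b)
    (hmul : ∀ a b, D (a * b) = D a * b + a * D b)
    (hC : ∀ c : K, D (RatFunc.C c) = RatFunc.C (dK c))
    (hX : D RatFunc.X = RatFunc.X * R₀)
    (hR₀ : 0 ≤ ordAt0 R₀) (f : RatFunc K) : ordAt0 f ≤ ordAt0 (D f) := by
  by_cases h0 : f = 0
  · rw [h0, D_zero D hadd]
  by_cases hD0 : D f = 0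
  · rw [hD0, ordAt0_zero]; exact le_top
  set p := f.num with hp
  set q := f.denom with hq
  have hfq : f * algebraMap K[X] (RatFunc K) q = algebraMap K[X] (RatFunc K) p := by
    have h := div_mul_cancel₀ (algebraMap K[X] (RatFunc K) p)
      (RatFunc.algebraMap_ne_zero (denom_ne_zero f))
    rw [num_div_denom] at h
    exact h
  have hDfq : D f * algebraMap K[X] (RatFunc K) q
      = D (algebraMap K[X] (RatFunc K) p) + -(f * D (algebraMap K[X] (RatFunc K) q)) := by
    have h := hmul f (algebraMap K[X] (RatFunc K) q)
    rw [hfq] at h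
    linear_combination -h
  set a : ℤ := rm p - rm q with ha
  have hordf : ordAt0 f = ((a : ℤ) : WithTop ℤ) := ordAt0_of_ne h0
  have hb1 : ((a : ℤ) : WithTop ℤ) + ((rm q : ℤ) : WithTop ℤ)
      ≤ ordAt0 (D (algebraMap K[X] (RatFunc K) p)) := by
    rw [← WithTop.coe_add]
    have h : a + rm q = rm p := by omega
    rw [h]
    exact ord_D_alg_ge dK D R₀ hadd hmul hC hX hR₀ p (num_ne_zero h0)
  have hb2 : ((a : ℤ) : WithTop ℤ) + ((rm q : ℤ) : WithTop ℤ)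
      ≤ ordAt0 (-(f * D (algebraMap K[X] (RatFunc K) q))) := by
    rw [ordAt0_neg]
    exact le_ordAt0_mul (le_of_eq hordf.symm)
      (ord_D_alg_ge dK D R₀ hadd hmul hC hX hR₀ q (denom_ne_zero f))
  have hsum := le_ordAt0_add hb1 hb2
  rw [← hDfq, ordAt0_mul _ _ hD0 (RatFunc.algebraMap_ne_zero (denom_ne_zero f)),
    ordAt0_algebraMap q (denom_ne_zero f)] at hsum
  rw [hordf]
  exact (WithTop.add_le_add_iff_right WithTop.coe_ne_top).mp hsum

lemma ev_D_alg (hKadd : ∀ a b : K, dK (a + b) = dK a + dK b)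
    (hadd : ∀ a b, D (a + b) = D a + D b)
    (hmul : ∀ a b, D (a * b) = D a * b + a * D b)
    (hC : ∀ c : K, D (RatFunc.C c) = RatFunc.C (dK c))
    (hX : D RatFunc.X = RatFunc.X * R₀)
    (hR₀ : 0 ≤ ordAt0 R₀) (p : K[X]) :
    ev (D (algebraMap K[X] (RatFunc K) p)) = dK (p.coeff 0) := by
  induction p using Polynomial.induction_on' with
  | add p q hp hq =>
    rw [map_add, hadd,
      ev_add (ord_D_alg_nonneg dK D R₀ hadd hmul hC hX hR₀ p)
        (ord_D_alg_nonneg dK D R₀ hadd hmul hC hX hR₀ q),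
      hp, hq, Polynomial.coeff_add, hKadd]
  | monomial k c =>
    rw [alg_monomial, hmul, hC, D_X_pow D R₀ hmul hX]
    cases k with
    | zero =>
      simp only [pow_zero, mul_one, Nat.cast_zero, zero_mul, mul_zero, add_zero]
      rw [ev_C]
      simp [Polynomial.coeff_monomial]
    | succ k =>
      have hXp : (1 : WithTop ℤ) ≤ ordAt0 ((RatFunc.X : RatFunc K) ^ (k + 1)) := by
        rw [ordAt0_X_pow]
        exact_mod_cast (by omega : (1 : ℤ) ≤ (k + 1 : ℕ))
      have ht1 : (1 : WithTop ℤ) ≤ ordAt0 (RatFunc.C (dK c) * RatFunc.X ^ (k + 1)) := by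
        have := le_ordAt0_mul (ordAt0_C_nonneg (dK c)) hXp
        simpa using this
      have ht2 : (1 : WithTop ℤ) ≤ ordAt0 (RatFunc.C c *
          (((k + 1 : ℕ) : RatFunc K) * RatFunc.X ^ (k + 1) * R₀)) := by
        have := le_ordAt0_mul (ordAt0_C_nonneg c)
          (le_ordAt0_mul (le_ordAt0_mul (ordAt0_natCast_nonneg (K := K) (k + 1)) hXp) hR₀)
        simpa using this
      rw [ev_add (le_trans (by norm_num) ht1) (le_trans (by norm_num) ht2),
        ev_eq_zero_of_pos ht1, ev_eq_zero_of_pos ht2]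
      rw [Polynomial.coeff_monomial]
      simp [dK_zero dK hKadd]

lemma ev_D (hKadd : ∀ a b : K, dK (a + b) = dK a + dK b)
    (hKmul : ∀ a b : K, dK (a * b) = dK a * b + a * dK b)
    (hadd : ∀ a b, D (a + b) = D a + D b)
    (hmul : ∀ a b, D (a * b) = D a * b + a * D b)
    (hC : ∀ c : K, D (RatFunc.C c) = RatFunc.C (dK c))
    (hX : D RatFunc.X = RatFunc.X * R₀)
    (hR₀ : 0 ≤ ordAt0 R₀) (f : RatFunc K) (h : 0 ≤ ordAt0 f) :
    ev (D f) = dK (ev f) := by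
  set p := f.num with hp
  set q := f.denom with hq
  have hfq : f * algebraMap K[X] (RatFunc K) q = algebraMap K[X] (RatFunc K) p := by
    have h' := div_mul_cancel₀ (algebraMap K[X] (RatFunc K) p)
      (RatFunc.algebraMap_ne_zero (denom_ne_zero f))
    rw [num_div_denom] at h'
    exact h'
  have hDf : 0 ≤ ordAt0 (D f) := le_trans h (ord_D_ge dK D R₀ hadd hmul hC hX hR₀ f)
  have hDq : 0 ≤ ordAt0 (D (algebraMap K[X] (RatFunc K) q)) :=
    ord_D_alg_nonneg dK D R₀ hadd hmul hC hX hR₀ q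
  have halgq : 0 ≤ ordAt0 (algebraMap K[X] (RatFunc K) q) := ordAt0_alg_nonneg q
  -- apply D to hfq
  have hD : D f * algebraMap K[X] (RatFunc K) q + f * D (algebraMap K[X] (RatFunc K) q)
      = D (algebraMap K[X] (RatFunc K) p) := by
    rw [← hmul, hfq]
  -- evaluate
  have hev := congrArg ev hD
  rw [ev_add (ordAt0_nonneg_mul hDf halgq) (ordAt0_nonneg_mul h hDq),
    ev_mul hDf halgq, ev_mul h hDq,
    ev_D_alg dK D R₀ hKadd hadd hmul hC hX hR₀ p,
    ev_D_alg dK D R₀ hKadd hadd hmul hC hX hR₀ q,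
    ev_algebraMap] at hev
  -- p.coeff 0 = ev f * q.coeff 0
  have hpq : p.coeff 0 = ev f * q.coeff 0 := (ev_mul_denom h).symm
  rw [hpq, hKmul] at hev
  have hq0 : q.coeff 0 ≠ 0 := denom_coeff_ne_zero h
  have := add_right_cancel hev
  exact mul_right_cancel₀ hq0 this

end Deriv

end RosenAux

open RosenAux in
/-- Let `T` be a Rosenlicht type differential polynomial of degree `n` over `K`
(in variables `u, u', …`, variable `i` standing for `u⁽ⁱ⁾`; its degree-`n` homogeneous part
is `uⁿ`). If the equation `T = 0` has a solution in the extension `K⟨y⟩ ≅ K(y)` of `K` by a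
special transcendental element `y` (with `y' = y·R₀(y)`, `ord R₀ ≥ 0`, and derivation `D`),
then it has a solution in `K`. -/
theorem rosenlicht_descends_special_extension
    {K : Type*} [Field K] [CharZero K] (dK : K → K)
    (hKadd : ∀ a b, dK (a + b) = dK a + dK b)
    (hKmul : ∀ a b, dK (a * b) = dK a * b + a * dK b)
    (n : ℕ) (T : MvPolynomial ℕ K)
    (hdeg : T.totalDegree ≤ n)
    (hhom : MvPolynomial.homogeneousComponent n T = MvPolynomial.X 0 ^ n)
    (R₀ : RatFunc K) (hR₀ : 0 ≤ ordAt0 R₀)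
    (D : RatFunc K → RatFunc K)
    (hadd : ∀ a b, D (a + b) = D a + D b)
    (hmul : ∀ a b, D (a * b) = D a * b + a * D b)
    (hC : ∀ c : K, D (RatFunc.C c) = RatFunc.C (dK c))
    (hX : D RatFunc.X = RatFunc.X * R₀)
    (hsol : ∃ u : RatFunc K, MvPolynomial.aeval (fun i => D^[i] u) T = 0) :
    ∃ u : K, MvPolynomial.aeval (fun i => dK^[i] u) T = 0 := by
  classical
  obtain ⟨u, hu⟩ := hsol
  set v : ℕ → RatFunc K := fun i => D^[i] u with hv
  set S : MvPolynomial ℕ K := T - MvPolynomial.X 0 ^ n with hSdef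
  have hT : T = MvPolynomial.X 0 ^ n + S := by rw [hSdef]; ring
  -- support of S lies in degrees `< n`
  have hsupp : ∀ d ∈ S.support, (d.sum fun _ e => e) + 1 ≤ n := by
    intro d hd
    have hcd : MvPolynomial.coeff d S ≠ 0 := MvPolynomial.mem_support_iff.mp hd
    by_cases hdeg' : (d.sum fun _ e => e) = n
    · exfalso
      have h1 : MvPolynomial.coeff d T
          = MvPolynomial.coeff d (MvPolynomial.X 0 ^ n : MvPolynomial ℕ K) := by
        have h2 := congrArg (MvPolynomial.coeff d) hhom
        have hdeg'' : d.degree = n := by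
          rw [Finsupp.degree]
          rw [Finsupp.sum] at hdeg'
          exact hdeg'
        rwa [MvPolynomial.coeff_homogeneousComponent, if_pos hdeg''] at h2
      apply hcd
      rw [hSdef, MvPolynomial.coeff_sub, h1, sub_self]
    · have hX0 : MvPolynomial.coeff d (MvPolynomial.X 0 ^ n : MvPolynomial ℕ K) = 0 := by
        rw [MvPolynomial.X_pow_eq_monomial, MvPolynomial.coeff_monomial, if_neg]
        intro h
        apply hdeg'
        rw [← h]
        simp [Finsupp.sum_single_index]
      have hdT : MvPolynomial.coeff d T ≠ 0 := by
        rw [hSdef, MvPolynomial.coeff_sub, hX0, sub_zero] at hcd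
        exact hcd
      have hle := MvPolynomial.le_totalDegree (MvPolynomial.mem_support_iff.mpr hdT)
      omega
  have haevalT : MvPolynomial.aeval v T = u ^ n + MvPolynomial.aeval v S := by
    rw [hT, map_add, map_pow, MvPolynomial.aeval_X]
    congr 1
  by_cases hord : 0 ≤ ordAt0 u
  · -- the solution is regular at 0: evaluate
    have hvord : ∀ i, 0 ≤ ordAt0 (v i) := by
      intro i
      induction i with
      | zero => simpa [hv] using hord
      | succ i ih =>
        have h' : v (i + 1) = D (v i) := Function.iterate_succ_apply' D i u
        rw [h']
        exact le_trans ih (ord_D_ge dK D R₀ hadd hmul hC hX hR₀ (v i))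
    set w : ℕ → Oreg K := fun i => ⟨v i, hvord i⟩ with hw
    have hwval : ∀ i, ((w i : Oreg K) : RatFunc K) = v i := fun i => rfl
    have hw0 : MvPolynomial.aeval w T = 0 := by
      have hval := MvPolynomial.comp_aeval_apply (f := w) (Subalgebra.val (Oreg K)) T
      apply Subtype.coe_injective
      show (Subalgebra.val (Oreg K)) (MvPolynomial.aeval w T) = (Subalgebra.val (Oreg K)) 0
      rw [map_zero, hval]
      exact hu
    refine ⟨ev u, ?_⟩
    have hiter : ∀ i, dK^[i] (ev u) = ev (v i) := by
      intro i
      induction i with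
      | zero => rfl
      | succ i ih =>
        rw [Function.iterate_succ_apply', ih]
        have h' : v (i + 1) = D (v i) := Function.iterate_succ_apply' D i u
        rw [h']
        exact (ev_D dK D R₀ hKadd hKmul hadd hmul hC hX hR₀ (v i) (hvord i)).symm
    have hfun : (fun i => dK^[i] (ev u)) = fun i => evO (w i) := by
      funext i
      rw [hiter i]
      rfl
    have h4 := MvPolynomial.comp_aeval_apply (f := w) (evO (K := K)) T
    rw [hfun, ← h4, hw0, map_zero]
  · -- impossible: the valuation of `u` would be negative
    exfalso
    have hu0 : u ≠ 0 := by
      intro h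
      rw [h, ordAt0_zero] at hord
      exact hord le_top
    set m : ℤ := rm u.num - rm u.denom with hm
    have hordu : ordAt0 u = (m : WithTop ℤ) := ordAt0_of_ne hu0
    have hmneg : m < 0 := by
      by_contra h
      apply hord
      rw [hordu]
      exact_mod_cast not_lt.mp h
    have hvm : ∀ i, (m : WithTop ℤ) ≤ ordAt0 (v i) := by
      intro i
      induction i with
      | zero => simpa [hv] using le_of_eq hordu.symm
      | succ i ih =>
        have h' : v (i + 1) = D (v i) := Function.iterate_succ_apply' D i u
        rw [h']
        exact le_trans ih (ord_D_ge dK D R₀ hadd hmul hC hX hR₀ (v i))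
    have hSord : ((((n : ℤ) - 1) * m : ℤ) : WithTop ℤ) ≤ ordAt0 (MvPolynomial.aeval v S) := by
      rw [MvPolynomial.aeval_def, MvPolynomial.eval₂_eq]
      apply le_ordAt0_sum
      intro d hd
      have hprod := le_ordAt0_prod d.support v d (fun i _ => hvm i)
      have hC0 : 0 ≤ ordAt0 (algebraMap K (RatFunc K) (MvPolynomial.coeff d S)) := by
        have h' : algebraMap K (RatFunc K) (MvPolynomial.coeff d S)
            = RatFunc.C (MvPolynomial.coeff d S) := by rw [RatFunc.algebraMap_eq_C]
        rw [h']
        exact ordAt0_C_nonneg _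
      have := le_ordAt0_mul hC0 hprod
      refine le_trans ?_ (le_trans (le_of_eq (zero_add _).symm) this)
      rw [WithTop.coe_le_coe]
      have hsum : (∑ i ∈ d.support, ((d i : ℤ)) * m) = ((d.sum fun _ e => e : ℕ) : ℤ) * m := by
        rw [Finsupp.sum]
        push_cast
        rw [Finset.sum_mul]
      rw [hsum]
      have hdn : ((d.sum fun _ e => e : ℕ) : ℤ) ≤ (n : ℤ) - 1 := by
        have := hsupp d hd
        omega
      exact mul_le_mul_of_nonpos_right hdn (le_of_lt hmneg)
    have hun : u ^ n = - MvPolynomial.aeval v S := by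
      rw [haevalT] at hu
      linear_combination hu
    have hordun : ordAt0 (u ^ n) = (((n : ℤ) * m : ℤ) : WithTop ℤ) := by
      have := ordAt0_pow (f := u) (m := m) hordu n
      rw [this]
    rw [hun, ordAt0_neg] at hordun
    have hle : ((((n : ℤ) - 1) * m : ℤ) : WithTop ℤ) ≤ (((n : ℤ) * m : ℤ) : WithTop ℤ) := by
      rw [← hordun]
      exact hSord
    rw [WithTop.coe_le_coe] at hle
    nlinarith [hle, hmneg]
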